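/- arXiv:2601.21419 — 6 statements merged into one kernel-verified Lean document; each statement's English description precedes it below -/
import Mathlib

section
/- Let D be a positive integer and let α, σ, φ, ψ, ξ, η be real numbers with φσ − ψα ≠ 0. Let x, n, x̂, n̂ be vectors in ℝ^D such that αx + σn = αx̂ + σn̂. Then (ξx̂ + ηn̂) − (ξx + ηn) = κ · ((φx̂ + ψn̂) − (φx + ψn)), where κ = (ξσ − ηα)/(φσ − ψα). -/
theorem sub_eq_div_smul_sub_of_smul_add_smul_eq {K M : Type*} [Field K] [AddCommGroup M] [Module K M]
    {α σ φ ψ : K} (ξ η : K) (hden : φ * σ - ψ * α ≠ 0) {x n x' n' : M}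
    (hz : α • x + σ • n = α • x' + σ • n') :
    (ξ • x' + η • n') - (ξ • x + η • n) =
      ((ξ * σ - η * α) / (φ * σ - ψ * α)) • ((φ • x' + ψ • n') - (φ • x + ψ • n)) := by
  have key : (φ * σ - ψ * α) • ((ξ • x' + η • n') - (ξ • x + η • n)) =
      (ξ * σ - η * α) • ((φ • x' + ψ • n') - (φ • x + ψ • n)) := by
    linear_combination (norm := module) (ξ * ψ - η * φ) • hz
  rw [div_eq_inv_mul, mul_smul, ← key, inv_smul_smul₀ hden]

theorem stmt_0_general (D : ℕ) (α σ φ ψ ξ η : ℝ)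
    (hden : φ * σ - ψ * α ≠ 0)
    (x n xhat nhat : Fin D → ℝ)
    (hz : α • x + σ • n = α • xhat + σ • nhat) :
    (ξ • xhat + η • nhat) - (ξ • x + η • n) =
      ((ξ * σ - η * α) / (φ * σ - ψ * α)) •
        ((φ • xhat + ψ • nhat) - (φ • x + ψ • n)) :=
  sub_eq_div_smul_sub_of_smul_add_smul_eq ξ η hden hz

/-- In the generalized diffusion framework, for any alternative target
`w = ξx + ηn`, the error `ŵ − w` equals `κ · (û − u)` with
`κ = (ξσ − ηα)/(φσ − ψα)`, whenever `αx + σn = αx̂ + σn̂`. -/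
theorem stmt_0 (D : ℕ) (hD : 0 < D) (α σ φ ψ ξ η : ℝ)
    (hden : φ * σ - ψ * α ≠ 0)
    (x n xhat nhat : Fin D → ℝ)
    (hz : α • x + σ • n = α • xhat + σ • nhat) :
    (ξ • xhat + η • nhat) - (ξ • x + η • n) =
      ((ξ * σ - η * α) / (φ * σ - ψ * α)) •
        ((φ • xhat + ψ • nhat) - (φ • x + ψ • n)) :=
  stmt_0_general D α σ φ ψ ξ η hden x n xhat nhat hz
end

section
/- Let D and d be positive integers with d ≤ D, let P be a real D×d matrix with PᵀP = I_d, and write Q = PPᵀ. Let μ be a finite measure on [0,1] and let σ, φ, ψ : [0,1] → ℝ be bounded measurable functions of α ∈ [0,1] (with α the identity function). Assume ∫(α² + σ(α)²)dμ > 0 and ∫σ(α)²dμ > 0. Then the matrix W* = [∫(φ(α)α + ψ(α)σ(α))dμ / ∫(α² + σ(α)²)dμ]·Q + [∫ψ(α)σ(α)dμ / ∫σ(α)²dμ]·(I − Q) is the unique real D×D matrix W satisfying ∫[W(α²Q + σ(α)²I) − (φ(α)αQ + ψ(α)σ(α)I)]dμ = 0. -/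
/-!
Integrating the gradient term by term turns it into `A • (W * Q) + B • W - (C • Q + E • 1)`,
where `A, B, C, E` are the integrals of `α², σ², φα, ψσ`. Since `Q` is idempotent, multiplying
`A • (V * Q) + B • V = 0` on the right by `Q` gives `(A + B) • (V * Q) = 0`, so `V * Q = 0` and then
`V = 0`: the affine equation has at most one solution, and `W*` is checked to be one by splitting
along `Q` and `1 - Q`.
-/

open MeasureTheory Matrix

attribute [local instance] Matrix.frobeniusNormedAddCommGroup Matrix.frobeniusNormedSpace

theorem Matrix.isIdempotentElem_mul_of_mul_eq_one {m n R : Type*} [Fintype m] [Fintype n]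
    [DecidableEq n] [Semiring R] {A : Matrix m n R} {B : Matrix n m R} (h : B * A = 1) :
    IsIdempotentElem (A * B) := by
  rw [IsIdempotentElem, Matrix.mul_assoc, ← Matrix.mul_assoc B, h, Matrix.one_mul]

theorem IsIdempotentElem.eq_zero_of_smul_mul_add_smul_eq_zero {𝕜 A : Type*} [Field 𝕜] [Ring A]
    [Algebra 𝕜 A] {q : A} {a b : 𝕜} (hq : IsIdempotentElem q) (hab : a + b ≠ 0)
    (hb : b ≠ 0) {v : A} (h : a • (v * q) + b • v = 0) : v = 0 := by
  have hvq : (a + b) • (v * q) = 0 := by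
    simpa only [add_mul, smul_mul_assoc, mul_assoc, hq.eq, zero_mul, add_smul] using
      congrArg (· * q) h
  have hvq' : v * q = 0 := (smul_eq_zero.mp hvq).resolve_left hab
  rw [hvq', smul_zero, zero_add] at h
  exact (smul_eq_zero.mp h).resolve_left hb

theorem IsIdempotentElem.smul_mul_add_smul_eq_iff {𝕜 A : Type*} [Field 𝕜] [Ring A]
    [Algebra 𝕜 A] {q : A} {a b c e : 𝕜} (hq : IsIdempotentElem q) (hab : a + b ≠ 0) (hb : b ≠ 0)
    (w : A) :
    a • (w * q) + b • w = c • q + e • 1 ↔ w = ((c + e) / (a + b)) • q + (e / b) • (1 - q) := by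
  set w₀ := ((c + e) / (a + b)) • q + (e / b) • (1 - q)
  have hw₀ : a • (w₀ * q) + b • w₀ = c • q + e • 1 := by
    simp only [w₀, add_mul, sub_mul, smul_mul_assoc, one_mul, hq.eq, sub_self,
      add_zero, smul_add, smul_sub, smul_smul]
    match_scalars
    · field_simp
      ring
    · field_simp
  refine ⟨fun hw => sub_eq_zero.mp (hq.eq_zero_of_smul_mul_add_smul_eq_zero hab hb ?_),
    fun hw => hw ▸ hw₀⟩
  rw [sub_mul, smul_sub, smul_sub, ← sub_eq_zero.mpr (hw.trans hw₀.symm)]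
  abel

theorem MeasureTheory.integral_smul_add_smul_sub_smul_add_smul {α E : Type*} [MeasurableSpace α]
    {μ : Measure α} [NormedAddCommGroup E] [NormedSpace ℝ E] [CompleteSpace E] {f g h k : α → ℝ}
    (hf : Integrable f μ) (hg : Integrable g μ) (hh : Integrable h μ) (hk : Integrable k μ)
    (u v x y : E) :
    ∫ a, (f a • u + g a • v - (h a • x + k a • y)) ∂μ
      = (∫ a, f a ∂μ) • u + (∫ a, g a ∂μ) • v - ((∫ a, h a ∂μ) • x + (∫ a, k a ∂μ) • y) := by
  rw [integral_sub ((hf.smul_const u).fun_add (hg.smul_const v))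
      ((hh.smul_const x).fun_add (hk.smul_const y)),
    integral_add (hf.smul_const u) (hg.smul_const v),
    integral_add (hh.smul_const x) (hk.smul_const y)]
  simp only [integral_smul_const]

theorem MeasureTheory.integrable_mul_of_bounded {α : Type*} [MeasurableSpace α] {μ : Measure α}
    [IsFiniteMeasure μ] {f g : α → ℝ} (hf : Measurable f) (hg : Measurable g)
    (hfb : ∃ C, ∀ a, |f a| ≤ C) (hgb : ∃ C, ∀ a, |g a| ≤ C) :
    Integrable (fun a => f a * g a) μ := by
  obtain ⟨Cf, hCf⟩ := hfb
  obtain ⟨Cg, hCg⟩ := hgb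
  exact (Integrable.of_bound hg.aestronglyMeasurable Cg (.of_forall hCg)).bdd_mul
    hf.aestronglyMeasurable (.of_forall hCf)

theorem stmt_6_general (D d : ℕ)
    (P : Matrix (Fin D) (Fin d) ℝ) (hP : Pᵀ * P = 1)
    (μ : Measure (Set.Icc (0:ℝ) 1)) [IsFiniteMeasure μ]
    (σ φ ψ : Set.Icc (0:ℝ) 1 → ℝ)
    (hσm : Measurable σ) (hφm : Measurable φ) (hψm : Measurable ψ)
    (hσb : ∃ C, ∀ a, |σ a| ≤ C) (hφb : ∃ C, ∀ a, |φ a| ≤ C) (hψb : ∃ C, ∀ a, |ψ a| ≤ C)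
    (hpos1 : 0 < ∫ a, ((a : ℝ) ^ 2 + σ a ^ 2) ∂μ)
    (hpos2 : 0 < ∫ a, σ a ^ 2 ∂μ)
    (Wstar : Matrix (Fin D) (Fin D) ℝ)
    (hWstar : Wstar =
      ((∫ a, (φ a * (a : ℝ) + ψ a * σ a) ∂μ) / (∫ a, ((a : ℝ) ^ 2 + σ a ^ 2) ∂μ)) • (P * Pᵀ)
        + ((∫ a, ψ a * σ a ∂μ) / (∫ a, σ a ^ 2 ∂μ)) • (1 - P * Pᵀ)) :
    (∫ a, (Wstar * ((a : ℝ) ^ 2 • (P * Pᵀ) + σ a ^ 2 • 1)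
        - ((φ a * (a : ℝ)) • (P * Pᵀ) + (ψ a * σ a) • 1)) ∂μ = 0) ∧
    ∀ W : Matrix (Fin D) (Fin D) ℝ,
      (∫ a, (W * ((a : ℝ) ^ 2 • (P * Pᵀ) + σ a ^ 2 • 1)
        - ((φ a * (a : ℝ)) • (P * Pᵀ) + (ψ a * σ a) • 1)) ∂μ = 0) → W = Wstar := by
  have hαm : Measurable fun a : Set.Icc (0:ℝ) 1 => (a : ℝ) := measurable_subtype_coe
  have hαb : ∃ C, ∀ a : Set.Icc (0:ℝ) 1, |(a : ℝ)| ≤ C :=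
    ⟨1, fun a => abs_le.mpr ⟨by linarith [a.2.1], a.2.2⟩⟩
  have iα : Integrable (fun a : Set.Icc (0:ℝ) 1 => (a : ℝ) ^ 2) μ := by
    simpa only [sq] using integrable_mul_of_bounded hαm hαm hαb hαb
  have iσ : Integrable (fun a => σ a ^ 2) μ := by
    simpa only [sq] using integrable_mul_of_bounded hσm hσm hσb hσb
  have iφ := integrable_mul_of_bounded (μ := μ) hφm hαm hφb hαb
  have iψ := integrable_mul_of_bounded (μ := μ) hψm hσm hψb hσb
  rw [integral_add iα iσ] at hpos1 hWstar
  rw [integral_add iφ iψ] at hWstar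
  have hgrad_eq_zero_iff (W : Matrix (Fin D) (Fin D) ℝ) :
      (∫ a, (W * ((a : ℝ) ^ 2 • (P * Pᵀ) + σ a ^ 2 • 1)
        - ((φ a * (a : ℝ)) • (P * Pᵀ) + (ψ a * σ a) • 1)) ∂μ = 0) ↔ W = Wstar := by
    simp only [mul_add, mul_smul_comm, mul_one]
    rw [integral_smul_add_smul_sub_smul_add_smul iα iσ iφ iψ, sub_eq_zero, hWstar]
    exact (isIdempotentElem_mul_of_mul_eq_one hP).smul_mul_add_smul_eq_iff hpos1.ne' hpos2.ne' W
  exact ⟨(hgrad_eq_zero_iff Wstar).mpr rfl, fun W => (hgrad_eq_zero_iff W).mp⟩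

/-- the equilibrium weight
`W* = [∫(φα+ψσ)dμ / ∫(α²+σ²)dμ]·Q + [∫ψσdμ / ∫σ²dμ]·(I−Q)` is the unique matrix at
which the population gradient `∫[W(α²Q + σ²I) − (φαQ + ψσI)]dμ` vanishes. -/
theorem stmt_6 (D d : ℕ) (hD : 0 < D) (hd : 0 < d) (hdD : d ≤ D)
    (P : Matrix (Fin D) (Fin d) ℝ) (hP : Pᵀ * P = 1)
    (μ : Measure (Set.Icc (0:ℝ) 1)) [IsFiniteMeasure μ]
    (σ φ ψ : Set.Icc (0:ℝ) 1 → ℝ)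
    (hσm : Measurable σ) (hφm : Measurable φ) (hψm : Measurable ψ)
    (hσb : ∃ C, ∀ a, |σ a| ≤ C) (hφb : ∃ C, ∀ a, |φ a| ≤ C) (hψb : ∃ C, ∀ a, |ψ a| ≤ C)
    (hpos1 : 0 < ∫ a, ((a : ℝ) ^ 2 + σ a ^ 2) ∂μ)
    (hpos2 : 0 < ∫ a, σ a ^ 2 ∂μ)
    (Wstar : Matrix (Fin D) (Fin D) ℝ)
    (hWstar : Wstar =
      ((∫ a, (φ a * (a : ℝ) + ψ a * σ a) ∂μ) / (∫ a, ((a : ℝ) ^ 2 + σ a ^ 2) ∂μ)) • (P * Pᵀ)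
        + ((∫ a, ψ a * σ a ∂μ) / (∫ a, σ a ^ 2 ∂μ)) • (1 - P * Pᵀ)) :
    (∫ a, (Wstar * ((a : ℝ) ^ 2 • (P * Pᵀ) + σ a ^ 2 • 1)
        - ((φ a * (a : ℝ)) • (P * Pᵀ) + (ψ a * σ a) • 1)) ∂μ = 0) ∧
    ∀ W : Matrix (Fin D) (Fin D) ℝ,
      (∫ a, (W * ((a : ℝ) ^ 2 • (P * Pᵀ) + σ a ^ 2 • 1)
        - ((φ a * (a : ℝ)) • (P * Pᵀ) + (ψ a * σ a) • 1)) ∂μ = 0) → W = Wstar :=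
  stmt_6_general D d P hP μ σ φ ψ hσm hφm hψm hσb hφb hψb hpos1 hpos2 Wstar hWstar
end

section
/- Let D and d be positive integers with d ≤ D, let P be a real D×d matrix with PᵀP = I_d, and write Q = PPᵀ. Let μ be a finite measure on [0,1] and let σ, φ, ψ : [0,1] → ℝ be bounded measurable functions of α with ∫(α² + σ²)dμ > 0 and ∫σ²dμ > 0. Define the loss L(W) = (1/2)∫[Tr(W(α²Q + σ²I)Wᵀ) − 2Tr((φαQ + ψσI)Wᵀ) + (φ²d + ψ²D)]dμ, and let W* = [∫(φα + ψσ)dμ / ∫(α² + σ²)dμ]·Q + [∫ψσ dμ / ∫σ²dμ]·(I − Q). Then L(W*) = (1/2)·d·[∫(φ² + ψ²)dμ − (∫(φα + ψσ)dμ)² / ∫(α² + σ²)dμ] + (1/2)·(D − d)·[∫ψ²dμ − (∫ψσ dμ)² / ∫σ²dμ]. -/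
open MeasureTheory Matrix

set_option maxHeartbeats 2000000 in
/-- Theorem 1 of the paper: at the equilibrium weight `W*`, the population
loss equals the sum of an intra-manifold contribution proportional to `d` and a residual
contribution proportional to `D − d`. -/
theorem stmt_7 (D d : ℕ) (hD : 0 < D) (hd : 0 < d) (hdD : d ≤ D)
    (P : Matrix (Fin D) (Fin d) ℝ) (hP : Pᵀ * P = 1)
    (μ : Measure (Set.Icc (0:ℝ) 1)) [IsFiniteMeasure μ]
    (σ φ ψ : Set.Icc (0:ℝ) 1 → ℝ)
    (hσm : Measurable σ) (hφm : Measurable φ) (hψm : Measurable ψ)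
    (hσb : ∃ C, ∀ a, |σ a| ≤ C) (hφb : ∃ C, ∀ a, |φ a| ≤ C) (hψb : ∃ C, ∀ a, |ψ a| ≤ C)
    (hpos1 : 0 < ∫ a, ((a : ℝ) ^ 2 + σ a ^ 2) ∂μ)
    (hpos2 : 0 < ∫ a, σ a ^ 2 ∂μ)
    (L : Matrix (Fin D) (Fin D) ℝ → ℝ)
    (hL : L = fun W =>
      (1 / 2 : ℝ) * ∫ a,
        (Matrix.trace (W * ((a : ℝ) ^ 2 • (P * Pᵀ) + σ a ^ 2 • 1) * Wᵀ)
          - 2 * Matrix.trace (((φ a * (a : ℝ)) • (P * Pᵀ) + (ψ a * σ a) • 1) * Wᵀ)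
          + (φ a ^ 2 * d + ψ a ^ 2 * D)) ∂μ)
    (Wstar : Matrix (Fin D) (Fin D) ℝ)
    (hWstar : Wstar =
      ((∫ a, (φ a * (a : ℝ) + ψ a * σ a) ∂μ) / (∫ a, ((a : ℝ) ^ 2 + σ a ^ 2) ∂μ)) • (P * Pᵀ)
        + ((∫ a, ψ a * σ a ∂μ) / (∫ a, σ a ^ 2 ∂μ)) • (1 - P * Pᵀ)) :
    L Wstar =
      (1 / 2 : ℝ) * d *
        ((∫ a, (φ a ^ 2 + ψ a ^ 2) ∂μ)
          - (∫ a, (φ a * (a : ℝ) + ψ a * σ a) ∂μ) ^ 2 / (∫ a, ((a : ℝ) ^ 2 + σ a ^ 2) ∂μ))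
      + (1 / 2 : ℝ) * ((D : ℝ) - d) *
        ((∫ a, ψ a ^ 2 ∂μ)
          - (∫ a, ψ a * σ a ∂μ) ^ 2 / (∫ a, σ a ^ 2 ∂μ)) := by
  set Q : Matrix (Fin D) (Fin D) ℝ := P * Pᵀ with hQdef
  have hQQ : Q * Q = Q := by
    rw [hQdef, Matrix.mul_assoc, ← Matrix.mul_assoc Pᵀ, hP, Matrix.one_mul]
  have hQsymm : Qᵀ = Q := by
    rw [hQdef, Matrix.transpose_mul, Matrix.transpose_transpose]
  have htrQ : Matrix.trace Q = (d : ℝ) := by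
    rw [hQdef, Matrix.trace_mul_comm, hP, Matrix.trace_one]
    simp
  have htr1Q : Matrix.trace ((1 : Matrix (Fin D) (Fin D) ℝ) - Q) = (D : ℝ) - d := by
    rw [Matrix.trace_sub, Matrix.trace_one, htrQ]
    simp
  set c1 : ℝ := (∫ a, (φ a * (a : ℝ) + ψ a * σ a) ∂μ) / (∫ a, ((a : ℝ) ^ 2 + σ a ^ 2) ∂μ)
    with hc1
  set c2 : ℝ := (∫ a, ψ a * σ a ∂μ) / (∫ a, σ a ^ 2 ∂μ) with hc2
  have hWs : Wstar = c1 • Q + c2 • (1 - Q) := hWstar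
  have h1Q : ((1 : Matrix (Fin D) (Fin D) ℝ) - Q) * Q = 0 := by
    rw [Matrix.sub_mul, Matrix.one_mul, hQQ, sub_self]
  have hQ1 : Q * ((1 : Matrix (Fin D) (Fin D) ℝ) - Q) = 0 := by
    rw [Matrix.mul_sub, Matrix.mul_one, hQQ, sub_self]
  have h11 : ((1 : Matrix (Fin D) (Fin D) ℝ) - Q) * ((1 : Matrix (Fin D) (Fin D) ℝ) - Q)
      = (1 : Matrix (Fin D) (Fin D) ℝ) - Q := by
    rw [Matrix.mul_sub, Matrix.mul_one, h1Q, sub_zero]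
  have hWT : Wstarᵀ = Wstar := by
    rw [hWs]
    simp [Matrix.transpose_add, Matrix.transpose_smul, Matrix.transpose_sub, hQsymm,
      Matrix.transpose_one]
  have hWQ : Wstar * Q = c1 • Q := by
    rw [hWs, Matrix.add_mul, Matrix.smul_mul, Matrix.smul_mul, hQQ, h1Q, smul_zero, add_zero]
  have hQW : Q * Wstar = c1 • Q := by
    rw [hWs, Matrix.mul_add, Matrix.mul_smul, Matrix.mul_smul, hQQ, hQ1, smul_zero, add_zero]
  have hWW : Wstar * Wstar = (c1 * c1) • Q + (c2 * c2) • (1 - Q) := by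
    rw [hWs, Matrix.add_mul, Matrix.mul_add, Matrix.mul_add]
    simp only [Matrix.smul_mul, Matrix.mul_smul, hQQ, hQ1, h1Q, h11, smul_zero, smul_smul]
    rw [add_zero, zero_add]
  have hWQW : Wstar * Q * Wstar = (c1 * c1) • Q := by
    rw [hWQ, Matrix.smul_mul, hQW, smul_smul]
  have htrW : Matrix.trace Wstar = c1 * d + c2 * ((D : ℝ) - d) := by
    rw [hWs, Matrix.trace_add, Matrix.trace_smul, Matrix.trace_smul, htrQ, htr1Q]
    simp [smul_eq_mul]
  -- trace computations
  have hT1 : ∀ x y : ℝ, Matrix.trace (Wstar * (x • Q + y • 1) * Wstarᵀ)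
      = x * (c1 * c1) * d + y * ((c1 * c1) * d + (c2 * c2) * ((D : ℝ) - d)) := by
    intro x y
    rw [hWT, Matrix.mul_add, Matrix.add_mul, Matrix.mul_smul, Matrix.mul_smul,
      Matrix.mul_one, Matrix.smul_mul, Matrix.smul_mul, hWQW, hWW]
    simp only [Matrix.trace_add, Matrix.trace_smul, htrQ, htr1Q, smul_eq_mul]
    ring
  have hT2 : ∀ x y : ℝ, Matrix.trace ((x • Q + y • 1) * Wstarᵀ)
      = x * c1 * d + y * (c1 * d + c2 * ((D : ℝ) - d)) := by
    intro x y
    rw [hWT, Matrix.add_mul, Matrix.smul_mul, Matrix.smul_mul, Matrix.one_mul, hQW]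
    simp only [Matrix.trace_add, Matrix.trace_smul, htrQ, htrW, smul_eq_mul]
    ring
  -- integrability
  obtain ⟨Cσ, hCσ⟩ := hσb
  obtain ⟨Cφ, hCφ⟩ := hφb
  obtain ⟨Cψ, hCψ⟩ := hψb
  have habs : ∀ a : Set.Icc (0:ℝ) 1, |(a : ℝ)| ≤ 1 := fun a =>
    abs_le.mpr ⟨by linarith [a.2.1], a.2.2⟩
  have hmc : Measurable (fun a : Set.Icc (0:ℝ) 1 => (a : ℝ)) := measurable_subtype_coe
  have hbdd : ∀ f : Set.Icc (0:ℝ) 1 → ℝ, Measurable f → (∃ C, ∀ a, |f a| ≤ C) →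
      Integrable f μ := by
    rintro f hf ⟨C, hC⟩
    exact ⟨hf.aestronglyMeasurable,
      MeasureTheory.HasFiniteIntegral.of_bounded (C := C)
        (ae_of_all _ fun a => by simpa [Real.norm_eq_abs] using hC a)⟩
  have hsq : ∀ (x C : ℝ), |x| ≤ C → x ^ 2 ≤ C ^ 2 := by
    intro x C h
    nlinarith [abs_nonneg x, sq_abs x]
  have hiA : Integrable (fun a : Set.Icc (0:ℝ) 1 => (a : ℝ) ^ 2 + σ a ^ 2) μ := by
    refine hbdd _ ((hmc.pow_const 2).add (hσm.pow_const 2)) ⟨1 + Cσ ^ 2, fun a => ?_⟩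
    have h1 := hsq _ _ (habs a)
    have h2 := hsq _ _ (hCσ a)
    rw [abs_of_nonneg (by positivity)]
    simpa using add_le_add h1 h2
  have hiS : Integrable (fun a : Set.Icc (0:ℝ) 1 => σ a ^ 2) μ :=
    hbdd _ (hσm.pow_const 2) ⟨Cσ ^ 2, fun a => by
      rw [abs_of_nonneg (by positivity)]; exact hsq _ _ (hCσ a)⟩
  have hiF2 : Integrable (fun a : Set.Icc (0:ℝ) 1 => φ a ^ 2) μ :=
    hbdd _ (hφm.pow_const 2) ⟨Cφ ^ 2, fun a => by
      rw [abs_of_nonneg (by positivity)]; exact hsq _ _ (hCφ a)⟩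
  have hiG2 : Integrable (fun a : Set.Icc (0:ℝ) 1 => ψ a ^ 2) μ :=
    hbdd _ (hψm.pow_const 2) ⟨Cψ ^ 2, fun a => by
      rw [abs_of_nonneg (by positivity)]; exact hsq _ _ (hCψ a)⟩
  have hiPS : Integrable (fun a : Set.Icc (0:ℝ) 1 => ψ a * σ a) μ := by
    refine hbdd _ (hψm.mul hσm) ⟨Cψ * Cσ, fun a => ?_⟩
    rw [abs_mul]
    exact mul_le_mul (hCψ a) (hCσ a) (abs_nonneg _) ((abs_nonneg _).trans (hCψ a))
  have hiF : Integrable (fun a : Set.Icc (0:ℝ) 1 => φ a * (a : ℝ) + ψ a * σ a) μ := by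
    refine hbdd _ ((hφm.mul hmc).add (hψm.mul hσm)) ⟨Cφ * 1 + Cψ * Cσ, fun a => ?_⟩
    refine (abs_add_le _ _).trans (add_le_add ?_ ?_)
    · rw [abs_mul]
      exact mul_le_mul (hCφ a) (habs a) (abs_nonneg _) ((abs_nonneg _).trans (hCφ a))
    · rw [abs_mul]
      exact mul_le_mul (hCψ a) (hCσ a) (abs_nonneg _) ((abs_nonneg _).trans (hCψ a))
  -- rewrite the integrand
  simp only [hL]
  have hg : (fun a : Set.Icc (0:ℝ) 1 =>
      Matrix.trace (Wstar * ((a : ℝ) ^ 2 • Q + σ a ^ 2 • 1) * Wstarᵀ)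
        - 2 * Matrix.trace (((φ a * (a : ℝ)) • Q + (ψ a * σ a) • 1) * Wstarᵀ)
        + (φ a ^ 2 * d + ψ a ^ 2 * D))
      = fun a : Set.Icc (0:ℝ) 1 =>
        (c1 * c1 * (d : ℝ)) * ((a : ℝ) ^ 2 + σ a ^ 2)
          + (c2 * c2 * ((D : ℝ) - d)) * (σ a ^ 2)
          - (2 * c1 * d) * (φ a * (a : ℝ) + ψ a * σ a)
          - (2 * c2 * ((D : ℝ) - d)) * (ψ a * σ a)
          + ((d : ℝ) * φ a ^ 2 + (D : ℝ) * ψ a ^ 2) := by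
    funext a
    rw [hT1, hT2]
    ring
  rw [hg]
  have ha := (hiA.const_mul (c1 * c1 * (d : ℝ)))
  have hb := (hiS.const_mul (c2 * c2 * ((D : ℝ) - d)))
  have hc := (hiF.const_mul (2 * c1 * (d : ℝ)))
  have hdd := (hiPS.const_mul (2 * c2 * ((D : ℝ) - d)))
  have he := (hiF2.const_mul (d : ℝ))
  have hf := (hiG2.const_mul (D : ℝ))
  have ja : Integrable (fun a : Set.Icc (0:ℝ) 1 =>
      c1 * c1 * (d : ℝ) * ((a : ℝ) ^ 2 + σ a ^ 2)
        + c2 * c2 * ((D : ℝ) - d) * σ a ^ 2) μ := ha.add hb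
  have jb : Integrable (fun a : Set.Icc (0:ℝ) 1 =>
      c1 * c1 * (d : ℝ) * ((a : ℝ) ^ 2 + σ a ^ 2)
        + c2 * c2 * ((D : ℝ) - d) * σ a ^ 2
        - 2 * c1 * (d : ℝ) * (φ a * (a : ℝ) + ψ a * σ a)) μ := ja.sub hc
  have jc : Integrable (fun a : Set.Icc (0:ℝ) 1 =>
      c1 * c1 * (d : ℝ) * ((a : ℝ) ^ 2 + σ a ^ 2)
        + c2 * c2 * ((D : ℝ) - d) * σ a ^ 2
        - 2 * c1 * (d : ℝ) * (φ a * (a : ℝ) + ψ a * σ a)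
        - 2 * c2 * ((D : ℝ) - d) * (ψ a * σ a)) μ := jb.sub hdd
  have jd : Integrable (fun a : Set.Icc (0:ℝ) 1 =>
      (d : ℝ) * φ a ^ 2 + (D : ℝ) * ψ a ^ 2) μ := he.add hf
  rw [integral_add jc jd,
    integral_sub jb hdd,
    integral_sub ja hc,
    integral_add ha hb,
    integral_add he hf,
    integral_const_mul, integral_const_mul, integral_const_mul, integral_const_mul,
    integral_const_mul, integral_const_mul]
  have hsum : (∫ a, (φ a ^ 2 + ψ a ^ 2) ∂μ) = (∫ a, φ a ^ 2 ∂μ) + ∫ a, ψ a ^ 2 ∂μ :=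
    integral_add hiF2 hiG2
  rw [hsum]
  have hne1 : (∫ a, ((a : ℝ) ^ 2 + σ a ^ 2) ∂μ) ≠ 0 := ne_of_gt hpos1
  have hne2 : (∫ a, σ a ^ 2 ∂μ) ≠ 0 := ne_of_gt hpos2
  rw [hc1, hc2]
  field_simp
  ring
end

section
/- Under the same hypotheses (P a real D×d matrix with PᵀP = I_d, Q = PPᵀ, μ a finite measure on [0,1], σ, φ, ψ bounded measurable with ∫(α² + σ²)dμ > 0 and ∫σ²dμ > 0), the matrix W* = [∫(φα + ψσ)dμ / ∫(α² + σ²)dμ]·Q + [∫ψσ dμ / ∫σ²dμ]·(I − Q) is a global minimizer of the loss L(W) = (1/2)∫[Tr(W(α²Q + σ²I)Wᵀ) − 2Tr((φαQ + ψσI)Wᵀ) + (φ²d + ψ²D)]dμ over all real D×D matrices W; that is, L(W) ≥ L(W*) for every W ∈ ℝ^{D×D}. -/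
open MeasureTheory Matrix

lemma trace_mul_transpose_nonneg {n m : Type*} [Fintype n] [Fintype m]
    (A : Matrix n m ℝ) : 0 ≤ (A * Aᵀ).trace := by
  have h : (A * Aᵀ).trace = ∑ i, ∑ j, A i j ^ 2 := by
    simp [Matrix.trace, Matrix.mul_apply, Matrix.diag, sq]
  rw [h]
  positivity

lemma integ_bounded {f : Set.Icc (0:ℝ) 1 → ℝ} (μ : Measure (Set.Icc (0:ℝ) 1))
    [IsFiniteMeasure μ] (hf : Measurable f) (C : ℝ) (hC : ∀ a, |f a| ≤ C) :
    Integrable f μ :=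
  (integrable_const C).mono' hf.aestronglyMeasurable (ae_of_all _ fun a => by
    simpa using hC a)

set_option maxHeartbeats 1000000 in
/-- the equilibrium weight `W*` is a global minimizer of the population loss
`L(W)` over all real `D×D` matrices. -/
theorem stmt_8 (D d : ℕ) (hD : 0 < D) (hd : 0 < d) (hdD : d ≤ D)
    (P : Matrix (Fin D) (Fin d) ℝ) (hP : Pᵀ * P = 1)
    (μ : Measure (Set.Icc (0:ℝ) 1)) [IsFiniteMeasure μ]
    (σ φ ψ : Set.Icc (0:ℝ) 1 → ℝ)
    (hσm : Measurable σ) (hφm : Measurable φ) (hψm : Measurable ψ)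
    (hσb : ∃ C, ∀ a, |σ a| ≤ C) (hφb : ∃ C, ∀ a, |φ a| ≤ C) (hψb : ∃ C, ∀ a, |ψ a| ≤ C)
    (hpos1 : 0 < ∫ a, ((a : ℝ) ^ 2 + σ a ^ 2) ∂μ)
    (hpos2 : 0 < ∫ a, σ a ^ 2 ∂μ)
    (L : Matrix (Fin D) (Fin D) ℝ → ℝ)
    (hL : L = fun W =>
      (1 / 2 : ℝ) * ∫ a,
        (Matrix.trace (W * ((a : ℝ) ^ 2 • (P * Pᵀ) + σ a ^ 2 • 1) * Wᵀ)
          - 2 * Matrix.trace (((φ a * (a : ℝ)) • (P * Pᵀ) + (ψ a * σ a) • 1) * Wᵀ)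
          + (φ a ^ 2 * d + ψ a ^ 2 * D)) ∂μ)
    (Wstar : Matrix (Fin D) (Fin D) ℝ)
    (hWstar : Wstar =
      ((∫ a, (φ a * (a : ℝ) + ψ a * σ a) ∂μ) / (∫ a, ((a : ℝ) ^ 2 + σ a ^ 2) ∂μ)) • (P * Pᵀ)
        + ((∫ a, ψ a * σ a ∂μ) / (∫ a, σ a ^ 2 ∂μ)) • (1 - P * Pᵀ)) :
    ∀ W : Matrix (Fin D) (Fin D) ℝ, L Wstar ≤ L W := by
  intro W
  -- basic matrix facts about the projection Q
  set Q : Matrix (Fin D) (Fin D) ℝ := P * Pᵀ with hQ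
  have hQT : Qᵀ = Q := by simp [hQ, Matrix.transpose_mul]
  have hQQ : Q * Q = Q := by
    rw [hQ, Matrix.mul_assoc, ← Matrix.mul_assoc Pᵀ P Pᵀ, hP, Matrix.one_mul]
  -- integrability
  have hαm : Measurable (fun a : Set.Icc (0:ℝ) 1 => (a:ℝ)) := measurable_subtype_coe
  have hα1 : ∀ a : Set.Icc (0:ℝ) 1, |(a:ℝ)| ≤ 1 := fun a =>
    abs_le.2 ⟨le_trans (by norm_num) a.2.1, a.2.2⟩
  obtain ⟨Cσ, hCσ⟩ := hσb
  obtain ⟨Cφ, hCφ⟩ := hφb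
  obtain ⟨Cψ, hCψ⟩ := hψb
  have hCσ0 : 0 ≤ Cσ := le_trans (abs_nonneg _) (hCσ ⟨0, by norm_num⟩)
  have hCφ0 : 0 ≤ Cφ := le_trans (abs_nonneg _) (hCφ ⟨0, by norm_num⟩)
  have hCψ0 : 0 ≤ Cψ := le_trans (abs_nonneg _) (hCψ ⟨0, by norm_num⟩)
  have I1 : Integrable (fun a : Set.Icc (0:ℝ) 1 => (a:ℝ)^2) μ := by
    refine integ_bounded μ (hαm.pow_const 2) 1 fun a => ?_
    rw [abs_pow]
    exact pow_le_one₀ (abs_nonneg _) (hα1 a)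
  have I2 : Integrable (fun a : Set.Icc (0:ℝ) 1 => σ a^2) μ := by
    refine integ_bounded μ (hσm.pow_const 2) (Cσ^2) fun a => ?_
    rw [abs_pow]
    exact pow_le_pow_left₀ (abs_nonneg _) (hCσ a) 2
  have I3 : Integrable (fun a : Set.Icc (0:ℝ) 1 => φ a * (a:ℝ)) μ := by
    refine integ_bounded μ (hφm.mul hαm) Cφ fun a => ?_
    rw [abs_mul]
    calc |φ a| * |(a:ℝ)| ≤ Cφ * 1 := mul_le_mul (hCφ a) (hα1 a) (abs_nonneg _) hCφ0
    _ = Cφ := mul_one _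
  have I4 : Integrable (fun a : Set.Icc (0:ℝ) 1 => ψ a * σ a) μ := by
    refine integ_bounded μ (hψm.mul hσm) (Cψ*Cσ) fun a => ?_
    rw [abs_mul]
    exact mul_le_mul (hCψ a) (hCσ a) (abs_nonneg _) hCψ0
  have I5 : Integrable (fun a : Set.Icc (0:ℝ) 1 => (φ a ^ 2 * d + ψ a ^ 2 * D : ℝ)) μ := by
    refine integ_bounded μ (((hφm.pow_const 2).mul_const _).add ((hψm.pow_const 2).mul_const _))
      (Cφ^2*d + Cψ^2*D) fun a => ?_
    have h1 : φ a ^ 2 ≤ Cφ ^ 2 := by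
      rw [← sq_abs]; exact pow_le_pow_left₀ (abs_nonneg _) (hCφ a) 2
    have h2 : ψ a ^ 2 ≤ Cψ ^ 2 := by
      rw [← sq_abs]; exact pow_le_pow_left₀ (abs_nonneg _) (hCψ a) 2
    have h0 : 0 ≤ φ a ^ 2 * d + ψ a ^ 2 * D := by positivity
    rw [abs_of_nonneg h0]
    have hd' : (0:ℝ) ≤ d := by positivity
    have hD' : (0:ℝ) ≤ D := by positivity
    nlinarith [sq_nonneg (φ a), sq_nonneg (ψ a)]
  -- scalar constants
  set A : ℝ := ∫ a, (a:ℝ)^2 ∂μ with hA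
  set s : ℝ := ∫ a, σ a^2 ∂μ with hs
  set b1 : ℝ := ∫ a, φ a * (a:ℝ) ∂μ with hb1
  set b2 : ℝ := ∫ a, ψ a * σ a ∂μ with hb2
  set c : ℝ := ∫ a, (φ a ^ 2 * d + ψ a ^ 2 * D : ℝ) ∂μ with hc
  have hAs : (∫ a, ((a : ℝ) ^ 2 + σ a ^ 2) ∂μ) = A + s := integral_add I1 I2
  have hbb : (∫ a, (φ a * (a : ℝ) + ψ a * σ a) ∂μ) = b1 + b2 := integral_add I3 I4
  have hspos : 0 < s := hpos2
  have hAspos : 0 < A + s := by rw [← hAs]; exact hpos1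
  have hA0 : 0 ≤ A := integral_nonneg fun a => sq_nonneg _
  -- decomposition of L
  have hLdec : ∀ V : Matrix (Fin D) (Fin D) ℝ, L V = (1/2 : ℝ) *
      (A * (V * Q * Vᵀ).trace + (s * (V * Vᵀ).trace +
        (b1 * (-2 * (Q * Vᵀ).trace) + (b2 * (-2 * Vᵀ.trace) + c)))) := by
    intro V
    rw [hL]
    simp only []
    have hpt : (fun a : Set.Icc (0:ℝ) 1 =>
        (Matrix.trace (V * ((a : ℝ) ^ 2 • Q + σ a ^ 2 • 1) * Vᵀ)
          - 2 * Matrix.trace (((φ a * (a : ℝ)) • Q + (ψ a * σ a) • 1) * Vᵀ)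
          + (φ a ^ 2 * d + ψ a ^ 2 * D)))
        = fun a : Set.Icc (0:ℝ) 1 =>
          ((a:ℝ)^2 * (V * Q * Vᵀ).trace + (σ a ^ 2 * (V * Vᵀ).trace +
            ((φ a * (a:ℝ)) * (-2 * (Q * Vᵀ).trace) + ((ψ a * σ a) * (-2 * Vᵀ.trace)
              + (φ a ^ 2 * d + ψ a ^ 2 * D))))) := by
      funext a
      simp only [Matrix.mul_add, Matrix.add_mul, Matrix.mul_smul, Matrix.smul_mul,
        Matrix.mul_one, Matrix.one_mul, Matrix.trace_add, Matrix.trace_smul, smul_eq_mul]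
      ring
    set k1 := (V * Q * Vᵀ).trace
    set k2 := (V * Vᵀ).trace
    set k3 := -2 * (Q * Vᵀ).trace
    set k4 := -2 * Vᵀ.trace
    have IR4 : Integrable (fun a : Set.Icc (0:ℝ) 1 =>
        ψ a * σ a * k4 + (φ a ^ 2 * d + ψ a ^ 2 * D)) μ := (I4.mul_const k4).add I5
    have IR3 : Integrable (fun a : Set.Icc (0:ℝ) 1 =>
        φ a * (a:ℝ) * k3 + (ψ a * σ a * k4 + (φ a ^ 2 * d + ψ a ^ 2 * D))) μ :=
      (I3.mul_const k3).add IR4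
    have IR2 : Integrable (fun a : Set.Icc (0:ℝ) 1 =>
        σ a ^ 2 * k2 + (φ a * (a:ℝ) * k3 + (ψ a * σ a * k4 + (φ a ^ 2 * d + ψ a ^ 2 * D)))) μ :=
      (I2.mul_const k2).add IR3
    rw [hpt,
      integral_add (I1.mul_const k1) IR2,
      integral_add (I2.mul_const k2) IR3,
      integral_add (I3.mul_const k3) IR4,
      integral_add (I4.mul_const k4) I5,
      integral_mul_const, integral_mul_const, integral_mul_const, integral_mul_const]
  -- rewrite Wstar
  rw [hAs, hbb] at hWstar
  have hWs : Wstar = ((b1 + b2)/(A + s)) • Q + (b2/s) • (1 - Q) := hWstar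
  have hWsT : Wstarᵀ = Wstar := by
    rw [hWs]
    simp [Matrix.transpose_add, Matrix.transpose_smul, Matrix.transpose_sub, hQT]
  -- the stationarity identity at the matrix level
  have hQW : Q * Wstar = ((b1 + b2)/(A + s)) • Q := by
    rw [hWs]
    simp only [Matrix.mul_add, Matrix.mul_smul, Matrix.mul_sub, Matrix.mul_one, hQQ]
    simp
  have hkey : A • (Q * Wstar) + s • Wstar = b1 • Q + b2 • (1 : Matrix (Fin D) (Fin D) ℝ) := by
    rw [hQW, hWs]
    ext i j
    simp only [Matrix.add_apply, Matrix.smul_apply, Matrix.sub_apply, Matrix.one_apply,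
      smul_eq_mul]
    split_ifs with h
    · field_simp
      ring
    · field_simp
      ring
  -- set X and expansions
  set X : Matrix (Fin D) (Fin D) ℝ := W - Wstar with hX
  have hWX : W = Wstar + X := by rw [hX]; abel
  have tsym1 : (Wstar * Q * Xᵀ).trace = (X * Q * Wstarᵀ).trace := by
    rw [← Matrix.trace_transpose (Wstar * Q * Xᵀ)]
    simp [Matrix.transpose_mul, hQT, Matrix.mul_assoc]
  have tsym2 : (Wstar * Xᵀ).trace = (X * Wstarᵀ).trace := by
    rw [← Matrix.trace_transpose (Wstar * Xᵀ)]
    simp [Matrix.transpose_mul]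
  -- stationarity at the scalar level
  have hQXT : (Q * Xᵀ).trace = (X * Q).trace := by
    rw [← Matrix.trace_transpose (Q * Xᵀ), Matrix.transpose_mul, Matrix.transpose_transpose,
      hQT]
  have hstat : A * (X * Q * Wstarᵀ).trace + s * (X * Wstarᵀ).trace
      = b1 * (Q * Xᵀ).trace + b2 * Xᵀ.trace := by
    rw [hWsT, hQXT, Matrix.trace_transpose]
    have h1 : A * (X * Q * Wstar).trace + s * (X * Wstar).trace
        = (X * (A • (Q * Wstar) + s • Wstar)).trace := by
      simp [Matrix.mul_add, Matrix.mul_smul, Matrix.trace_add, Matrix.trace_smul,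
        Matrix.mul_assoc, smul_eq_mul]
    rw [h1, hkey]
    simp [Matrix.mul_add, Matrix.mul_smul, Matrix.trace_add, Matrix.trace_smul,
      Matrix.mul_one, smul_eq_mul]
  -- positivity of quadratic terms
  have hqpos : 0 ≤ (X * Q * Xᵀ).trace := by
    have h : X * Q * Xᵀ = (X * P) * (X * P)ᵀ := by
      simp [hQ, Matrix.transpose_mul, Matrix.mul_assoc]
    rw [h]
    exact trace_mul_transpose_nonneg _
  have hxpos : 0 ≤ (X * Xᵀ).trace := trace_mul_transpose_nonneg X
  -- expansions of the trace terms
  have e1 : (W * Q * Wᵀ).trace = (Wstar * Q * Wstarᵀ).trace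
      + 2 * (X * Q * Wstarᵀ).trace + (X * Q * Xᵀ).trace := by
    rw [hWX]
    simp only [Matrix.add_mul, Matrix.mul_add, Matrix.transpose_add, Matrix.trace_add]
    rw [tsym1]; ring
  have e2 : (W * Wᵀ).trace = (Wstar * Wstarᵀ).trace
      + 2 * (X * Wstarᵀ).trace + (X * Xᵀ).trace := by
    rw [hWX]
    simp only [Matrix.add_mul, Matrix.mul_add, Matrix.transpose_add, Matrix.trace_add]
    rw [tsym2]; ring
  have e3 : (Q * Wᵀ).trace = (Q * Wstarᵀ).trace + (Q * Xᵀ).trace := by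
    rw [hWX]
    simp only [Matrix.mul_add, Matrix.transpose_add, Matrix.trace_add]
  have e4 : Wᵀ.trace = Wstarᵀ.trace + Xᵀ.trace := by
    rw [hWX]
    simp only [Matrix.transpose_add, Matrix.trace_add]
  -- conclude
  rw [hLdec W, hLdec Wstar, e1, e2, e3, e4]
  nlinarith [mul_nonneg hA0 hqpos, mul_nonneg hspos.le hxpos, hstat]
end

section
/- Let D be a positive integer, let {q₁, …, q_D} be an orthonormal basis of ℝ^D, let λ₁, …, λ_D ≥ 0, and set Σ = Σᵢ λᵢqᵢqᵢᵀ. Let μ be a finite measure on [0,1] and σ, φ, ψ : [0,1] → ℝ bounded measurable with ∫(λᵢα² + σ²)dμ > 0 for every i. Define L(W) = (1/2)∫[Tr(W(α²Σ + σ²I)Wᵀ) − 2Tr((φαΣ + ψσI)Wᵀ) + Tr(φ²Σ + ψ²I)]dμ and W* = Σᵢ [∫(λᵢφα + ψσ)dμ / ∫(λᵢα² + σ²)dμ]·qᵢqᵢᵀ. Then L(W*) = (1/2)·Σᵢ [∫(λᵢφ² + ψ²)dμ − (∫(λᵢφα + ψσ)dμ)² / ∫(λᵢα² + σ²)dμ].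 -/
open MeasureTheory Matrix

lemma vmv_mul_vmv {D : ℕ} (u v w x : Fin D → ℝ) :
    vecMulVec u v * vecMulVec w x = (v ⬝ᵥ w) • vecMulVec u x := by
  ext i j
  simp [Matrix.mul_apply, vecMulVec_apply, dotProduct, Finset.mul_sum, Finset.sum_mul]
  apply Finset.sum_congr rfl
  intro k _
  ring

lemma trace_vmv {D : ℕ} (u v : Fin D → ℝ) :
    Matrix.trace (vecMulVec u v) = u ⬝ᵥ v := by
  simp [Matrix.trace, Matrix.diag, vecMulVec_apply, dotProduct]

lemma vmv_transpose {D : ℕ} (u v : Fin D → ℝ) :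
    (vecMulVec u v)ᵀ = vecMulVec v u := by
  ext i j; simp [vecMulVec_apply, Matrix.transpose_apply, mul_comm]

/-- for colored data with second moment `Σ = Σᵢ λᵢqᵢqᵢᵀ`, the population
loss at the equilibrium weight `W*` decomposes as a sum of per-eigenmode contributions:
`L(W*) = (1/2)·Σᵢ [∫(λᵢφ²+ψ²)dμ − (∫(λᵢφα+ψσ)dμ)²/∫(λᵢα²+σ²)dμ]`. -/
theorem stmt_15 (D : ℕ) (hD : 0 < D)
    (q : Fin D → Fin D → ℝ)
    (hq : ∀ i j, q i ⬝ᵥ q j = if i = j then (1:ℝ) else 0)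
    (lam : Fin D → ℝ) (hlam : ∀ i, 0 ≤ lam i)
    (S : Matrix (Fin D) (Fin D) ℝ)
    (hS : S = ∑ i, lam i • Matrix.vecMulVec (q i) (q i))
    (μ : Measure (Set.Icc (0:ℝ) 1)) [IsFiniteMeasure μ]
    (σ φ ψ : Set.Icc (0:ℝ) 1 → ℝ)
    (hσm : Measurable σ) (hφm : Measurable φ) (hψm : Measurable ψ)
    (hσb : ∃ C, ∀ a, |σ a| ≤ C) (hφb : ∃ C, ∀ a, |φ a| ≤ C) (hψb : ∃ C, ∀ a, |ψ a| ≤ C)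
    (hpos : ∀ i, 0 < ∫ a, (lam i * (a : ℝ) ^ 2 + σ a ^ 2) ∂μ)
    (L : Matrix (Fin D) (Fin D) ℝ → ℝ)
    (hL : L = fun W =>
      (1 / 2 : ℝ) * ∫ a,
        (Matrix.trace (W * ((a : ℝ) ^ 2 • S + σ a ^ 2 • 1) * Wᵀ)
          - 2 * Matrix.trace (((φ a * (a : ℝ)) • S + (ψ a * σ a) • 1) * Wᵀ)
          + Matrix.trace (φ a ^ 2 • S + ψ a ^ 2 • (1 : Matrix (Fin D) (Fin D) ℝ))) ∂μ)
    (Wstar : Matrix (Fin D) (Fin D) ℝ)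
    (hWstar : Wstar = ∑ i,
      ((∫ a, (lam i * φ a * (a : ℝ) + ψ a * σ a) ∂μ)
        / (∫ a, (lam i * (a : ℝ) ^ 2 + σ a ^ 2) ∂μ)) • Matrix.vecMulVec (q i) (q i)) :
    L Wstar = (1 / 2 : ℝ) * ∑ i,
      ((∫ a, (lam i * φ a ^ 2 + ψ a ^ 2) ∂μ)
        - (∫ a, (lam i * φ a * (a : ℝ) + ψ a * σ a) ∂μ) ^ 2
          / (∫ a, (lam i * (a : ℝ) ^ 2 + σ a ^ 2) ∂μ)) := by
  -- notation
  set P : Fin D → Matrix (Fin D) (Fin D) ℝ := fun i => vecMulVec (q i) (q i) with hP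
  set I1 : Fin D → ℝ := fun i => ∫ a, (lam i * φ a * (a : ℝ) + ψ a * σ a) ∂μ with hI1
  set I2 : Fin D → ℝ := fun i => ∫ a, (lam i * (a : ℝ) ^ 2 + σ a ^ 2) ∂μ with hI2
  set I3 : Fin D → ℝ := fun i => ∫ a, (lam i * φ a ^ 2 + ψ a ^ 2) ∂μ with hI3
  set c : Fin D → ℝ := fun i => I1 i / I2 i with hc
  -- completeness: ∑ P i = 1
  have hone : (∑ i, P i) = (1 : Matrix (Fin D) (Fin D) ℝ) := by
    have hQ : (Matrix.of q) * (Matrix.of q)ᵀ = 1 := by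
      ext i j
      simpa [Matrix.mul_apply, Matrix.one_apply, dotProduct] using hq i j
    have hQ' : (Matrix.of q)ᵀ * (Matrix.of q) = 1 := mul_eq_one_comm.mp hQ
    ext k l
    have := congrArg (fun M => M k l) hQ'
    simpa [Matrix.mul_apply, vecMulVec_apply, Matrix.transpose_apply, P,
      Matrix.sum_apply] using this
  -- products
  have hPP : ∀ i j, P i * P j = if i = j then P i else 0 := by
    intro i j
    rw [hP]
    simp only
    rw [vmv_mul_vmv, hq]
    split_ifs with h
    · subst h; simp
    · simp
  have key : ∀ d e : Fin D → ℝ,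
      (∑ i, d i • P i) * (∑ j, e j • P j) = ∑ i, (d i * e i) • P i := by
    intro d e
    rw [Finset.sum_mul]
    refine Finset.sum_congr rfl fun i _ => ?_
    rw [Finset.mul_sum]
    have h1 : ∀ j, (d i • P i) * (e j • P j) = (d i * e j) • (P i * P j) := fun j => by
      rw [smul_mul_assoc, mul_smul_comm, smul_smul]
    simp only [h1, hPP]
    simp
  have hexp : ∀ x y : ℝ, x • S + y • (1 : Matrix (Fin D) (Fin D) ℝ)
      = ∑ i, (x * lam i + y) • P i := by
    intro x y
    rw [hS, ← hone, Finset.smul_sum, Finset.smul_sum, ← Finset.sum_add_distrib]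
    refine Finset.sum_congr rfl fun i _ => ?_
    rw [smul_smul, add_smul]
  have htr : ∀ d : Fin D → ℝ, Matrix.trace (∑ i, d i • P i) = ∑ i, d i := by
    intro d
    rw [Matrix.trace_sum]
    refine Finset.sum_congr rfl fun i _ => ?_
    rw [Matrix.trace_smul, hP]
    simp only
    rw [trace_vmv, hq]
    simp
  have hWform : Wstar = ∑ i, c i • P i := hWstar
  have hWT : Wstarᵀ = Wstar := by
    rw [hWform, Matrix.transpose_sum]
    refine Finset.sum_congr rfl fun i _ => ?_
    rw [Matrix.transpose_smul, hP]
    simp only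
    rw [vmv_transpose]
  -- pointwise integrand identity
  have hint : ∀ a : Set.Icc (0:ℝ) 1,
      (Matrix.trace (Wstar * ((a : ℝ) ^ 2 • S + σ a ^ 2 • 1) * Wstarᵀ)
        - 2 * Matrix.trace (((φ a * (a : ℝ)) • S + (ψ a * σ a) • 1) * Wstarᵀ)
        + Matrix.trace (φ a ^ 2 • S + ψ a ^ 2 • (1 : Matrix (Fin D) (Fin D) ℝ)))
      = ∑ i, (c i ^ 2 * (lam i * (a : ℝ) ^ 2 + σ a ^ 2)
          - 2 * (c i * (lam i * φ a * (a : ℝ) + ψ a * σ a))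
          + (lam i * φ a ^ 2 + ψ a ^ 2)) := by
    intro a
    rw [hWT, hexp ((a:ℝ)^2) (σ a ^ 2), hexp (φ a * (a:ℝ)) (ψ a * σ a),
      hexp (φ a ^ 2) (ψ a ^ 2), hWform, key, key, key, htr, htr, htr,
      Finset.mul_sum, ← Finset.sum_sub_distrib, ← Finset.sum_add_distrib]
    refine Finset.sum_congr rfl fun i _ => ?_
    ring
  -- integrability
  obtain ⟨Cσ, hCσ⟩ := hσb
  obtain ⟨Cφ, hCφ⟩ := hφb
  obtain ⟨Cψ, hCψ⟩ := hψb
  have hmcoe : Measurable fun a : Set.Icc (0:ℝ) 1 => (a : ℝ) := measurable_subtype_coe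
  have hacoe : ∀ a : Set.Icc (0:ℝ) 1, |(a : ℝ)| ≤ 1 := fun a =>
    abs_le.mpr ⟨by linarith [a.2.1], a.2.2⟩
  have hbdd : ∀ f : Set.Icc (0:ℝ) 1 → ℝ, Measurable f → (∀ x, |f x| ≤ |f x|) →
      ∀ C : ℝ, (∀ x, |f x| ≤ C) → Integrable f μ := by
    intro f hm _ C hC
    exact ⟨hm.aestronglyMeasurable,
      HasFiniteIntegral.of_bounded (C := C) (ae_of_all _ fun x => by
        simpa [Real.norm_eq_abs] using hC x)⟩
  have hf1 : ∀ i, Integrable (fun a : Set.Icc (0:ℝ) 1 => lam i * φ a * (a : ℝ) + ψ a * σ a) μ := by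
    intro i
    refine hbdd _ (((measurable_const.mul hφm).mul hmcoe).add (hψm.mul hσm))
      (fun x => le_rfl) (|lam i| * Cφ * 1 + Cψ * Cσ) fun x => ?_
    have h1 : |lam i * φ x * (x:ℝ)| ≤ |lam i| * Cφ * 1 := by
      rw [abs_mul, abs_mul]
      have h0 : (0:ℝ) ≤ Cφ := le_trans (abs_nonneg _) (hCφ x)
      gcongr
      · exact hCφ x
      · exact hacoe x
    have h2 : |ψ x * σ x| ≤ Cψ * Cσ := by
      rw [abs_mul]
      exact mul_le_mul (hCψ x) (hCσ x) (abs_nonneg _) (le_trans (abs_nonneg _) (hCψ x))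
    calc |lam i * φ x * (x:ℝ) + ψ x * σ x| ≤ _ + _ := abs_add_le _ _
      _ ≤ _ := add_le_add h1 h2
  have hf2 : ∀ i, Integrable (fun a : Set.Icc (0:ℝ) 1 => lam i * (a : ℝ) ^ 2 + σ a ^ 2) μ := by
    intro i
    refine hbdd (fun a : Set.Icc (0:ℝ) 1 => lam i * (a : ℝ) ^ 2 + σ a ^ 2) ((measurable_const.mul (hmcoe.pow_const 2)).add (hσm.pow_const 2))
      (fun x => le_rfl) (|lam i| * 1 + Cσ ^ 2) fun x => ?_
    have h1 : |lam i * (x:ℝ) ^ 2| ≤ |lam i| * 1 := by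
      rw [abs_mul, abs_pow]
      have hx2 : |(x:ℝ)| ^ 2 ≤ 1 := by
        have := hacoe x
        nlinarith [abs_nonneg (x:ℝ)]
      exact mul_le_mul_of_nonneg_left hx2 (abs_nonneg _)
    have h2 : |σ x ^ 2| ≤ Cσ ^ 2 := by
      rw [abs_pow]
      exact pow_le_pow_left₀ (abs_nonneg _) (hCσ x) 2
    calc |lam i * (x:ℝ)^2 + σ x ^ 2| ≤ _ + _ := abs_add_le _ _
      _ ≤ _ := add_le_add h1 h2
  have hf3 : ∀ i, Integrable (fun a : Set.Icc (0:ℝ) 1 => lam i * φ a ^ 2 + ψ a ^ 2) μ := by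
    intro i
    refine hbdd _ ((measurable_const.mul (hφm.pow_const 2)).add (hψm.pow_const 2))
      (fun x => le_rfl) (|lam i| * Cφ ^ 2 + Cψ ^ 2) fun x => ?_
    have h1 : |lam i * φ x ^ 2| ≤ |lam i| * Cφ ^ 2 := by
      rw [abs_mul, abs_pow]
      have h2 : |φ x| ^ 2 ≤ Cφ ^ 2 := pow_le_pow_left₀ (abs_nonneg _) (hCφ x) 2
      exact mul_le_mul_of_nonneg_left h2 (abs_nonneg _)
    have h2 : |ψ x ^ 2| ≤ Cψ ^ 2 := by
      rw [abs_pow]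
      exact pow_le_pow_left₀ (abs_nonneg _) (hCψ x) 2
    calc |lam i * φ x ^ 2 + ψ x ^ 2| ≤ _ + _ := abs_add_le _ _
      _ ≤ _ := add_le_add h1 h2
  -- per-mode integrable
  have hmode : ∀ i : Fin D, Integrable (fun a : Set.Icc (0:ℝ) 1 =>
      c i ^ 2 * (lam i * (a : ℝ) ^ 2 + σ a ^ 2)
        - 2 * (c i * (lam i * φ a * (a : ℝ) + ψ a * σ a))
        + (lam i * φ a ^ 2 + ψ a ^ 2)) μ := fun i =>
    (((hf2 i).const_mul _).sub (((hf1 i).const_mul _).const_mul 2)).add (hf3 i)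
  -- per-mode integral value
  have hmodeint : ∀ i : Fin D, (∫ a, (c i ^ 2 * (lam i * (a : ℝ) ^ 2 + σ a ^ 2)
        - 2 * (c i * (lam i * φ a * (a : ℝ) + ψ a * σ a))
        + (lam i * φ a ^ 2 + ψ a ^ 2)) ∂μ)
      = c i ^ 2 * I2 i - 2 * (c i * I1 i) + I3 i := by
    intro i
    have ha1 : Integrable (fun a : Set.Icc (0:ℝ) 1 =>
        c i ^ 2 * (lam i * (a : ℝ) ^ 2 + σ a ^ 2)) μ := (hf2 i).const_mul _
    have ha2 : Integrable (fun a : Set.Icc (0:ℝ) 1 =>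
        2 * (c i * (lam i * φ a * (a : ℝ) + ψ a * σ a))) μ :=
      ((hf1 i).const_mul _).const_mul 2
    have ha12 : Integrable (fun a : Set.Icc (0:ℝ) 1 =>
        c i ^ 2 * (lam i * (a : ℝ) ^ 2 + σ a ^ 2)
          - 2 * (c i * (lam i * φ a * (a : ℝ) + ψ a * σ a))) μ := ha1.sub ha2
    rw [integral_add ha12 (hf3 i), integral_sub ha1 ha2,
      integral_const_mul, integral_const_mul, integral_const_mul]
  -- put it together
  have hI2pos : ∀ i, 0 < I2 i := hpos
  rw [hL]
  simp only
  calc (1/2 : ℝ) * ∫ a, (Matrix.trace (Wstar * ((a : ℝ) ^ 2 • S + σ a ^ 2 • 1) * Wstarᵀ)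
          - 2 * Matrix.trace (((φ a * (a : ℝ)) • S + (ψ a * σ a) • 1) * Wstarᵀ)
          + Matrix.trace (φ a ^ 2 • S + ψ a ^ 2 • (1 : Matrix (Fin D) (Fin D) ℝ))) ∂μ
      = (1/2 : ℝ) * ∫ a, (∑ i, (c i ^ 2 * (lam i * (a : ℝ) ^ 2 + σ a ^ 2)
          - 2 * (c i * (lam i * φ a * (a : ℝ) + ψ a * σ a))
          + (lam i * φ a ^ 2 + ψ a ^ 2))) ∂μ := by
        congr 1
        exact integral_congr_ae (ae_of_all _ hint)
    _ = (1/2 : ℝ) * ∑ i, (c i ^ 2 * I2 i - 2 * (c i * I1 i) + I3 i) := by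
        rw [integral_finset_sum _ (fun i _ => hmode i)]
        congr 1
        exact Finset.sum_congr rfl fun i _ => hmodeint i
    _ = (1/2 : ℝ) * ∑ i, (I3 i - I1 i ^ 2 / I2 i) := by
        congr 1
        refine Finset.sum_congr rfl fun i _ => ?_
        have h2 : I2 i ≠ 0 := ne_of_gt (hI2pos i)
        rw [hc]
        field_simp
        ring
end

section
/- Let D be a positive integer, let Σ be a real symmetric positive semidefinite D×D matrix, and let k ∈ ℝ. With μ the Lebesgue measure on [0,1], σ(α) = 1 − α, φ(α) = k, ψ(α) = −(1 − k), the colored-data optimal loss Δ*(k) = (1/2)·Σᵢ [∫(λᵢk² + (1−k)²)dμ − (∫(λᵢkα − (1−k)(1−α))dμ)² / ∫(λᵢα² + (1−α)²)dμ] (the sum over an orthonormal eigenbasis of Σ with eigenvalues λᵢ) equals (1/8)·[(D + Tr Σ)·k² − 2D·k + Tr((I + 4Σ)(I + Σ)⁻¹)]. -/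
open MeasureTheory Matrix

lemma my_vecMulVec_mul {D : ℕ} (u v w z : Fin D → ℝ) :
    vecMulVec u v * vecMulVec w z = (v ⬝ᵥ w) • vecMulVec u z := by
  ext i j
  simp only [Matrix.mul_apply, vecMulVec_apply, Matrix.smul_apply, dotProduct, smul_eq_mul,
    Finset.sum_mul]
  exact Finset.sum_congr rfl fun x _ => by ring

lemma my_trace_vecMulVec {D : ℕ} (u v : Fin D → ℝ) :
    (vecMulVec u v).trace = u ⬝ᵥ v := by
  simp [Matrix.trace, Matrix.diag, vecMulVec_apply, dotProduct]

lemma my_int_const (c : ℝ) : (∫ α in Set.Icc (0:ℝ) 1, c) = c := by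
  simp [Real.volume_Icc]

lemma my_Icc_to_interval (f : ℝ → ℝ) :
    (∫ α in Set.Icc (0:ℝ) 1, f α) = ∫ α in (0:ℝ)..1, f α := by
  rw [MeasureTheory.integral_Icc_eq_integral_Ioc, ← intervalIntegral.integral_of_le (by norm_num)]

lemma my_int_lin (a b : ℝ) :
    (∫ α in Set.Icc (0:ℝ) 1, (a * α - b * (1 - α))) = a / 2 - b / 2 := by
  rw [my_Icc_to_interval]
  have : ∀ α : ℝ, a * α - b * (1 - α) = (a + b) * α + (-b) := fun α => by ring
  simp only [this]
  rw [intervalIntegral.integral_add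
      ((by fun_prop : Continuous fun α : ℝ => (a + b) * α).intervalIntegrable 0 1)
      ((by fun_prop : Continuous fun _ : ℝ => -b).intervalIntegrable 0 1),
    intervalIntegral.integral_const_mul, integral_id]
  simp; ring

lemma my_int_quad (a : ℝ) :
    (∫ α in Set.Icc (0:ℝ) 1, (a * α ^ 2 + (1 - α) ^ 2)) = a / 3 + 1 / 3 := by
  rw [my_Icc_to_interval]
  have : ∀ α : ℝ, a * α ^ 2 + (1 - α) ^ 2 = (a + 1) * α ^ 2 + ((-2) * α + 1) := fun α => by ring
  simp only [this]
  rw [intervalIntegral.integral_add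
      ((by fun_prop : Continuous fun α : ℝ => (a + 1) * α ^ 2).intervalIntegrable 0 1)
      ((by fun_prop : Continuous fun α : ℝ => -2 * α + 1).intervalIntegrable 0 1),
    intervalIntegral.integral_add
      ((by fun_prop : Continuous fun α : ℝ => (-2 : ℝ) * α).intervalIntegrable 0 1)
      ((by fun_prop : Continuous fun _ : ℝ => (1 : ℝ)).intervalIntegrable 0 1),
    intervalIntegral.integral_const_mul, intervalIntegral.integral_const_mul,
    integral_id, integral_pow]
  simp; ring

/-- for colored data with second moment `Σ` (symmetric PSD, spectral
decomposition `Σ = Σᵢ λᵢqᵢqᵢᵀ`), under the flow-matching process `α = t`, `σ = 1 − t`,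
uniform time sampling on `[0,1]` and the `k`-parameterized target `φ = k`, `ψ = −(1−k)`,
the optimal loss equals `(1/8)[(D + TrΣ)k² − 2Dk + Tr((I + 4Σ)(I + Σ)⁻¹)]`. -/
theorem stmt_17 (D : ℕ) (hD : 0 < D)
    (S : Matrix (Fin D) (Fin D) ℝ) (hSsymm : S.IsSymm) (hSpsd : S.PosSemidef)
    (q : Fin D → Fin D → ℝ)
    (hq : ∀ i j, q i ⬝ᵥ q j = if i = j then (1:ℝ) else 0)
    (lam : Fin D → ℝ) (hlam : ∀ i, 0 ≤ lam i)
    (hS : S = ∑ i, lam i • Matrix.vecMulVec (q i) (q i))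
    (k : ℝ) :
    (1 / 2 : ℝ) * ∑ i,
        ((∫ α in Set.Icc (0:ℝ) 1, (lam i * k ^ 2 + (1 - k) ^ 2))
          - (∫ α in Set.Icc (0:ℝ) 1, (lam i * k * α - (1 - k) * (1 - α))) ^ 2
            / (∫ α in Set.Icc (0:ℝ) 1, (lam i * α ^ 2 + (1 - α) ^ 2)))
    = (1 / 8 : ℝ) * (((D : ℝ) + S.trace) * k ^ 2 - 2 * D * k
        + Matrix.trace ((1 + (4 : ℝ) • S) * (1 + S)⁻¹)) := by
  have hpos : ∀ i, (0:ℝ) < 1 + lam i := fun i => by linarith [hlam i]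
  have hne : ∀ i, (1:ℝ) + lam i ≠ 0 := fun i => (hpos i).ne'
  -- completeness: ∑ qᵢqᵢᵀ = 1
  have hone : (∑ i, vecMulVec (q i) (q i)) = (1 : Matrix (Fin D) (Fin D) ℝ) := by
    set Q : Matrix (Fin D) (Fin D) ℝ := Matrix.of q with hQ
    have h1 : Q * Qᵀ = 1 := by
      ext i j
      have := hq i j
      simpa [Matrix.mul_apply, Matrix.one_apply, dotProduct, hQ] using this
    have h2 : Qᵀ * Q = 1 := mul_eq_one_comm.mp h1
    ext a b
    have := congrFun (congrFun h2 a) b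
    simpa [Matrix.mul_apply, Matrix.sum_apply, vecMulVec_apply, hQ] using this
  have h1S : (1 : Matrix (Fin D) (Fin D) ℝ) + S
      = ∑ i, (1 + lam i) • vecMulVec (q i) (q i) := by
    rw [hS, ← hone, ← Finset.sum_add_distrib]
    exact Finset.sum_congr rfl fun i _ => by rw [add_smul, one_smul]
  set B : Matrix (Fin D) (Fin D) ℝ := ∑ i, (1 + lam i)⁻¹ • vecMulVec (q i) (q i) with hB
  have hmulB : ((1 : Matrix (Fin D) (Fin D) ℝ) + S) * B = 1 := by
    rw [h1S, hB, Finset.sum_mul_sum]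
    have : ∀ i ∈ Finset.univ, ∀ j ∈ Finset.univ,
        ((1 + lam i) • vecMulVec (q i) (q i)) * ((1 + lam j)⁻¹ • vecMulVec (q j) (q j))
        = if i = j then vecMulVec (q i) (q i) else 0 := by
      intro i _ j _
      rw [Matrix.smul_mul, Matrix.mul_smul, my_vecMulVec_mul, hq]
      by_cases h : i = j
      · subst h; simp [smul_smul, mul_inv_cancel₀ (hne i)]
      · simp [h]
    rw [Finset.sum_congr rfl fun i hi => Finset.sum_congr rfl fun j hj => this i hi j hj]
    simp [hone]
  have hinv : ((1 : Matrix (Fin D) (Fin D) ℝ) + S)⁻¹ = B := Matrix.inv_eq_right_inv hmulB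
  have h4S : (1 : Matrix (Fin D) (Fin D) ℝ) + (4:ℝ) • S
      = ∑ i, (1 + 4 * lam i) • vecMulVec (q i) (q i) := by
    rw [hS, Finset.smul_sum, ← hone, ← Finset.sum_add_distrib]
    exact Finset.sum_congr rfl fun i _ => by
      rw [smul_smul, add_smul, one_smul]
  have htr : Matrix.trace ((1 + (4 : ℝ) • S) * (1 + S)⁻¹)
      = ∑ i, (1 + 4 * lam i) * (1 + lam i)⁻¹ := by
    rw [hinv, h4S, hB, Finset.sum_mul_sum]
    have : ∀ i ∈ (Finset.univ : Finset (Fin D)), ∀ j ∈ Finset.univ,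
        ((1 + 4 * lam i) • vecMulVec (q i) (q i)) * ((1 + lam j)⁻¹ • vecMulVec (q j) (q j))
        = if i = j then ((1 + 4 * lam i) * (1 + lam i)⁻¹) • vecMulVec (q i) (q i) else 0 := by
      intro i _ j _
      rw [Matrix.smul_mul, Matrix.mul_smul, my_vecMulVec_mul, hq]
      by_cases h : i = j
      · subst h; simp [smul_smul]
      · simp [h]
    rw [Finset.sum_congr rfl fun i hi => Finset.sum_congr rfl fun j hj => this i hi j hj]
    rw [Matrix.trace_sum]
    refine Finset.sum_congr rfl fun i _ => ?_
    rw [Finset.sum_ite_eq Finset.univ i, if_pos (Finset.mem_univ i),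
      Matrix.trace_smul, my_trace_vecMulVec, hq]
    simp
  have htrS : S.trace = ∑ i, lam i := by
    rw [hS, Matrix.trace_sum]
    refine Finset.sum_congr rfl fun i _ => ?_
    rw [Matrix.trace_smul, my_trace_vecMulVec, hq]
    simp
  rw [htr, htrS]
  simp only [my_int_const, my_int_lin, my_int_quad]
  have hR : ((D : ℝ) + ∑ i, lam i) * k ^ 2 - 2 * D * k
      + ∑ i, (1 + 4 * lam i) * (1 + lam i)⁻¹
      = ∑ i, ((1 + lam i) * k ^ 2 - 2 * k + (1 + 4 * lam i) * (1 + lam i)⁻¹) := by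
    have e1 : ∑ i : Fin D, ((1 + lam i) * k ^ 2) = ((D : ℝ) + ∑ i, lam i) * k ^ 2 := by
      rw [← Finset.sum_mul]; congr 1
      rw [Finset.sum_add_distrib]; simp
    have e2 : ∑ _i : Fin D, (2 * k) = 2 * (D : ℝ) * k := by
      simp [Finset.sum_const]; ring
    rw [Finset.sum_add_distrib, Finset.sum_sub_distrib, e1, e2]
  rw [hR, Finset.mul_sum, Finset.mul_sum]
  refine Finset.sum_congr rfl fun i _ => ?_
  have h3 : lam i / 3 + 1 / 3 ≠ 0 := by
    have := hlam i; intro h; nlinarith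
  have h4 := hne i
  have e : lam i / 3 + 1 / 3 = (1 + lam i) / 3 := by ring
  rw [e, div_div_eq_mul_div, div_eq_mul_inv]
  field_simp
  ring
end
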